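/- arXiv:math/9909140 — 7 statements merged into one kernel-verified Lean document; each statement's English description precedes it below -/
import Mathlib

section
/- Let V be a finite-dimensional complex normed vector space and let δ : ℝ → V be differentiable with δ(t) ≠ 0 for every t ∈ ℝ. If for every t ∈ ℝ the derivative deriv δ t lies in the ℂ-span of δ(t), then the direction of δ is constant: for every t ∈ ℝ, δ(t) lies in the ℂ-span of δ(0). -/
/-- Local constancy of direction: near any point `t₁`, the curve stays in the
ℂ-span of `δ t₁`. -/
lemma local_span_of_radial_velocity
    {V : Type*} [NormedAddCommGroup V] [NormedSpace ℂ V] [FiniteDimensional ℂ V]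
    (δ : ℝ → V) (hδ : Differentiable ℝ δ) (hne : ∀ t : ℝ, δ t ≠ 0)
    (hrad : ∀ t : ℝ, deriv δ t ∈ Submodule.span ℂ {δ t}) (t₁ : ℝ) :
    ∀ᶠ t in nhds t₁, δ t ∈ Submodule.span ℂ {δ t₁} := by
  obtain ⟨ψ, hψ⟩ : ∃ ψ : V →L[ℂ] ℂ, ψ (δ t₁) = 1 := SeparatingDual.exists_eq_one (hne t₁)
  set v : ℝ → ℂ := fun t => ψ (δ t) with hv
  have hvcont : Continuous v := ψ.continuous.comp hδ.continuous
  have hUopen : IsOpen {t : ℝ | v t ≠ 0} := isOpen_ne.preimage hvcont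
  have ht₁U : t₁ ∈ {t : ℝ | v t ≠ 0} := by simp [v, hψ]
  obtain ⟨ε, hε, hball⟩ := Metric.isOpen_iff.1 hUopen t₁ ht₁U
  set s : Set ℝ := Metric.ball t₁ ε with hs
  -- the renormalized curve
  set r : ℝ → V := fun t => (v t)⁻¹ • δ t with hr
  have hderiv : ∀ t ∈ s, HasDerivAt r 0 t := by
    intro t hts
    have hvne : v t ≠ 0 := hball hts
    obtain ⟨c, hc⟩ := Submodule.mem_span_singleton.1 (hrad t)
    have hdd : HasDerivAt δ (c • δ t) t := by
      rw [hc]; exact (hδ t).hasDerivAt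
    have hdv : HasDerivAt v (c * v t) t := by
      have h := ((ψ.restrictScalars ℝ).hasFDerivAt (x := δ t)).comp_hasDerivAt t hdd
      have h' : HasDerivAt (⇑ψ ∘ δ) (c * ψ (δ t)) t := by simpa [map_smul, smul_eq_mul] using h
      exact h'
    have hinv := (hasDerivAt_inv hvne).scomp t hdv
    have h2 := hinv.smul hdd
    convert h2 using 1
    · rfl
    simp only [Function.comp_apply, smul_eq_mul, smul_smul, ← add_smul]
    have h3 : (v t)⁻¹ * c + c * v t * -(v t ^ 2)⁻¹ = 0 := by
      field_simp; ring
    rw [h3, zero_smul]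
  have hconst : ∀ t ∈ s, r t = r t₁ := by
    intro t hts
    have hconv : Convex ℝ s := convex_ball t₁ ε
    have hdiff : DifferentiableOn ℝ r s := fun x hx =>
      ((hderiv x hx).differentiableAt).differentiableWithinAt
    have hfd : ∀ x ∈ s, fderivWithin ℝ r s x = 0 := by
      intro x hx
      have h1 : HasFDerivAt r (0 : ℝ →L[ℝ] V) x := by
        have h := (hderiv x hx).hasFDerivAt
        have h2 : (ContinuousLinearMap.toSpanSingleton ℝ (0 : V)) = 0 := by
          ext; simp
        rwa [h2] at h
      rw [fderivWithin_of_isOpen Metric.isOpen_ball hx, h1.fderiv]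
    exact hconv.is_const_of_fderivWithin_eq_zero hdiff hfd hts (Metric.mem_ball_self hε)
  filter_upwards [Metric.ball_mem_nhds t₁ hε] with t hts
  have h1 : r t = r t₁ := hconst t hts
  have hvne : v t ≠ 0 := hball hts
  have : δ t = (v t) • r t₁ := by
    rw [← h1, hr]
    simp [smul_smul, mul_inv_cancel₀ hvne]
  rw [this, hr]
  exact Submodule.smul_mem _ _ (Submodule.smul_mem _ _ (Submodule.mem_span_singleton_self _))

/-- A differentiable curve `δ : ℝ → V` in a finite-dimensional complex normed space
that never vanishes and whose velocity is always radial (i.e. `deriv δ t` lies in the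
ℂ-span of `δ t`) has constant direction: `δ t` lies in the ℂ-span of `δ 0` for all `t`. -/
theorem constant_direction_of_radial_velocity
    {V : Type*} [NormedAddCommGroup V] [NormedSpace ℂ V] [FiniteDimensional ℂ V]
    (δ : ℝ → V) (hδ : Differentiable ℝ δ) (hne : ∀ t : ℝ, δ t ≠ 0)
    (hrad : ∀ t : ℝ, deriv δ t ∈ Submodule.span ℂ {δ t}) :
    ∀ t : ℝ, δ t ∈ Submodule.span ℂ {δ 0} := by
  set S : Set ℝ := {t | δ t ∈ Submodule.span ℂ {δ 0}} with hS
  have h0 : (0 : ℝ) ∈ S := Submodule.mem_span_singleton_self _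
  have hclosed : IsClosed S := by
    have : IsClosed (Submodule.span ℂ {δ 0} : Set V) :=
      (Submodule.span ℂ {δ 0}).closed_of_finiteDimensional
    exact this.preimage hδ.continuous
  have hopen : IsOpen S := by
    rw [isOpen_iff_mem_nhds]
    intro t₁ ht₁
    obtain ⟨a, ha⟩ := Submodule.mem_span_singleton.1 ht₁
    have hane : a ≠ 0 := by
      rintro rfl
      exact hne t₁ (by simp [← ha])
    have hspan : Submodule.span ℂ {δ t₁} = Submodule.span ℂ {δ 0} := by
      rw [← ha]
      exact Submodule.span_singleton_smul_eq (IsUnit.mk0 a hane) _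
    filter_upwards [local_span_of_radial_velocity δ hδ hne hrad t₁] with t ht
    rw [hS, Set.mem_setOf_eq, ← hspan]
    exact ht
  have : S = Set.univ := by
    rcases isClopen_iff.1 ⟨hclosed, hopen⟩ with h | h
    · exact absurd (h ▸ h0) (Set.notMem_empty _)
    · exact h
  intro t
  exact Set.eq_univ_iff_forall.1 this t
end

section
/- Let V be a finite-dimensional complex normed vector space, W ⊆ V a ℂ-linear subspace, and γ : ℝ → V a differentiable map with γ(t) ∉ W for every t. If for every t ∈ ℝ the subspace span_ℂ{γ(t), deriv γ t} has nonzero intersection with W (i.e. span_ℂ{γ(t), deriv γ t} ⊓ W ≠ ⊥), then for every t ∈ ℝ the point γ(t) lies in W ⊔ span_ℂ{γ(0)}; in particular the whole curve lies in a subspace of dimension at most (dim W) + 1 containing W. -/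
private lemma sup_span_eq_of_sub_smul_mem
    {V : Type*} [AddCommGroup V] [Module ℂ V] (W : Submodule ℂ V)
    {x y : V} {c : ℂ} (hc : c ≠ 0) (h : x - c • y ∈ W) :
    W ⊔ Submodule.span ℂ {x} = W ⊔ Submodule.span ℂ {y} := by
  apply le_antisymm
  · refine sup_le le_sup_left ?_
    rw [Submodule.span_le, Set.singleton_subset_iff]
    have hx : x = (x - c • y) + c • y := by abel
    rw [hx]
    exact Submodule.add_mem _ (Submodule.mem_sup_left h)
      (Submodule.mem_sup_right (Submodule.smul_mem _ _ (Submodule.mem_span_singleton_self y)))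
  · refine sup_le le_sup_left ?_
    rw [Submodule.span_le, Set.singleton_subset_iff]
    have hy : y = c⁻¹ • x - c⁻¹ • (x - c • y) := by
      rw [smul_sub, smul_smul, inv_mul_cancel₀ hc, one_smul]; abel
    rw [hy]
    exact Submodule.sub_mem _
      (Submodule.mem_sup_right (Submodule.smul_mem _ _ (Submodule.mem_span_singleton_self x)))
      (Submodule.mem_sup_left (Submodule.smul_mem _ _ h))

private lemma curve_local_const
    {V : Type*} [NormedAddCommGroup V] [NormedSpace ℂ V] [FiniteDimensional ℂ V]
    (W : Submodule ℂ V) (γ : ℝ → V) (hγ : Differentiable ℝ γ)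
    (hA : ∀ t : ℝ, ∃ c : ℂ, deriv γ t - c • γ t ∈ W)
    (hW : ∀ t : ℝ, γ t ∉ W) (t₀ : ℝ) :
    ∃ U : Set ℝ, IsOpen U ∧ t₀ ∈ U ∧
      ∀ t ∈ U, W ⊔ Submodule.span ℂ {γ t} = W ⊔ Submodule.span ℂ {γ t₀} := by
  -- choose a functional vanishing on W, nonzero at γ t₀
  have hq : W.mkQ (γ t₀) ≠ 0 := by
    rw [Submodule.mkQ_apply, ne_eq, Submodule.Quotient.mk_eq_zero]
    exact hW t₀
  obtain ⟨g, hg⟩ : ∃ g : Module.Dual ℂ (V ⧸ W), g (W.mkQ (γ t₀)) ≠ 0 := by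
    by_contra h
    push_neg at h
    exact hq ((Module.forall_dual_apply_eq_zero_iff ℂ _).mp h)
  set f : V →ₗ[ℂ] ℂ := g.comp W.mkQ with hf
  have hfW : ∀ w ∈ W, f w = 0 := by
    intro w hw
    have : W.mkQ w = 0 := by
      rw [Submodule.mkQ_apply, Submodule.Quotient.mk_eq_zero]; exact hw
    simp [hf, this]
  set F : ℝ → ℂ := fun t => f (γ t) with hFdef
  have hFcont : Continuous F := f.continuous_of_finiteDimensional.comp hγ.continuous
  have hFt₀ : F t₀ ≠ 0 := hg
  -- find a ball on which F ≠ 0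
  have hUopen : IsOpen (F ⁻¹' {(0 : ℂ)}ᶜ) := (isOpen_compl_singleton).preimage hFcont
  obtain ⟨ε, hε, hball⟩ := Metric.isOpen_iff.mp hUopen t₀ hFt₀
  have hFne : ∀ t ∈ Metric.ball t₀ ε, F t ≠ 0 := fun t ht => hball ht
  -- derivative of any functional composed with γ
  have hd : ∀ (φ : V →ₗ[ℂ] ℂ) (t : ℝ), HasDerivAt (fun s => φ (γ s)) (φ (deriv γ t)) t := by
    intro φ t
    have := ((LinearMap.toContinuousLinearMap φ).restrictScalars
      ℝ).hasFDerivAt.comp_hasDerivAt t (hγ t).hasDerivAt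
    exact this
  -- if φ vanishes on W, then d/dt φ(γ t) = c t * φ(γ t)
  have hd' : ∀ (φ : V →ₗ[ℂ] ℂ), (∀ w ∈ W, φ w = 0) → ∀ (t : ℝ) (c : ℂ),
      deriv γ t - c • γ t ∈ W → HasDerivAt (fun s => φ (γ s)) (c * φ (γ t)) t := by
    intro φ hφ t c hc
    have h0 := hφ _ hc
    rw [map_sub, map_smul, smul_eq_mul, sub_eq_zero] at h0
    simpa [h0] using hd φ t
  -- key: ratios are constant on the ball
  have key : ∀ (φ : V →ₗ[ℂ] ℂ), (∀ w ∈ W, φ w = 0) →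
      ∀ t ∈ Metric.ball t₀ ε, φ (γ t) / F t = φ (γ t₀) / F t₀ := by
    intro φ hφ t ht
    set G : ℝ → ℂ := fun s => φ (γ s) / F s with hG
    have hGderiv : ∀ s ∈ Metric.ball t₀ ε, HasDerivAt G 0 s := by
      intro s hs
      obtain ⟨c, hc⟩ := hA s
      have h1 : HasDerivAt (fun u => φ (γ u)) (c * φ (γ s)) s := hd' φ hφ s c hc
      have h2 : HasDerivAt F (c * F s) s := hd' f hfW s c hc
      have h3 := h1.div h2 (hFne s hs)
      have h4 : (c * φ (γ s) * F s - φ (γ s) * (c * F s)) / F s ^ 2 = 0 := by ring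
      rwa [h4] at h3
    have hGdiff : DifferentiableOn ℝ G (Metric.ball t₀ ε) :=
      fun s hs => (hGderiv s hs).differentiableAt.differentiableWithinAt
    have hGzero : ∀ s ∈ Metric.ball t₀ ε, fderivWithin ℝ G (Metric.ball t₀ ε) s = 0 := by
      intro s hs
      have h2 := (hGderiv s hs).hasFDerivAt
      rw [h2.hasFDerivWithinAt.fderivWithin (Metric.isOpen_ball.uniqueDiffWithinAt hs)]
      ext
      simp
    exact (convex_ball t₀ ε).is_const_of_fderivWithin_eq_zero hGdiff hGzero ht
      (Metric.mem_ball_self hε)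
  refine ⟨Metric.ball t₀ ε, Metric.isOpen_ball, Metric.mem_ball_self hε, ?_⟩
  intro t ht
  have hFt : F t ≠ 0 := hFne t ht
  set c : ℂ := F t / F t₀ with hc
  have hcne : c ≠ 0 := div_ne_zero hFt hFt₀
  have hmem : γ t - c • γ t₀ ∈ W := by
    have hq0 : W.mkQ (γ t - c • γ t₀) = 0 := by
      apply (Module.forall_dual_apply_eq_zero_iff ℂ _).mp
      intro ψ
      have hψW : ∀ w ∈ W, (ψ.comp W.mkQ) w = 0 := by
        intro w hw
        have : W.mkQ w = 0 := by
          rw [Submodule.mkQ_apply, Submodule.Quotient.mk_eq_zero]; exact hw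
        simp [this]
      have hk := key (ψ.comp W.mkQ) hψW t ht
      rw [div_eq_div_iff hFt hFt₀] at hk
      simp only [LinearMap.comp_apply] at hk
      have hrel : ψ (W.mkQ (γ t)) = c * ψ (W.mkQ (γ t₀)) := by
        rw [hc, div_mul_eq_mul_div, eq_div_iff hFt₀]
        linear_combination hk
      have hsub : ψ (W.mkQ (γ t - c • γ t₀)) = ψ (W.mkQ (γ t)) - c * ψ (W.mkQ (γ t₀)) := by
        simp [map_sub, map_smul]
      rw [hsub, hrel]
      ring
    rwa [Submodule.mkQ_apply, Submodule.Quotient.mk_eq_zero] at hq0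
  exact sup_span_eq_of_sub_smul_mem W hcne hmem

/-- If a differentiable curve `γ : ℝ → V` in a finite-dimensional complex normed space
avoids a ℂ-subspace `W` but all of its tangent lines `span ℂ {γ t, deriv γ t}` meet `W`
nontrivially, then the whole curve lies in `W ⊔ span ℂ {γ 0}`, a subspace of dimension
at most `dim W + 1` containing `W`. -/
theorem curve_in_span_of_tangent_meets_subspace
    {V : Type*} [NormedAddCommGroup V] [NormedSpace ℂ V] [FiniteDimensional ℂ V]
    (W : Submodule ℂ V) (γ : ℝ → V) (hγ : Differentiable ℝ γ)
    (hW : ∀ t : ℝ, γ t ∉ W)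
    (htan : ∀ t : ℝ, Submodule.span ℂ {γ t, deriv γ t} ⊓ W ≠ ⊥) :
    (∀ t : ℝ, γ t ∈ W ⊔ Submodule.span ℂ {γ 0}) ∧
      Module.finrank ℂ ↥(W ⊔ Submodule.span ℂ {γ 0}) ≤ Module.finrank ℂ W + 1 := by
  have hA : ∀ t : ℝ, ∃ c : ℂ, deriv γ t - c • γ t ∈ W := by
    intro t
    obtain ⟨x, hx, hx0⟩ := Submodule.exists_mem_ne_zero_of_ne_bot (htan t)
    rw [Submodule.mem_inf] at hx
    obtain ⟨hx1, hxW⟩ := hx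
    obtain ⟨a, b, hab⟩ := Submodule.mem_span_pair.mp hx1
    have hb : b ≠ 0 := by
      rintro rfl
      rcases eq_or_ne a 0 with rfl | ha
      · simp only [zero_smul, add_zero] at hab
        exact hx0 hab.symm
      · apply hW t
        have hγt : γ t = a⁻¹ • x := by
          rw [← hab]
          simp [smul_add, smul_smul, inv_mul_cancel₀ ha]
        rw [hγt]
        exact W.smul_mem _ hxW
    refine ⟨-(b⁻¹ * a), ?_⟩
    have heq : deriv γ t - (-(b⁻¹ * a)) • γ t = b⁻¹ • x := by
      rw [← hab, smul_add, smul_smul, smul_smul, inv_mul_cancel₀ hb, one_smul, neg_smul,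
        sub_neg_eq_add]
      abel
    rw [heq]
    exact W.smul_mem _ hxW
  have hlc : IsLocallyConstant (fun t => W ⊔ Submodule.span ℂ {γ t}) := by
    rw [IsLocallyConstant.iff_exists_open]
    intro t₀
    obtain ⟨U, hU, ht₀, hcon⟩ := curve_local_const W γ hγ hA hW t₀
    exact ⟨U, hU, ht₀, hcon⟩
  have hP : ∀ t : ℝ, W ⊔ Submodule.span ℂ {γ t} = W ⊔ Submodule.span ℂ {γ 0} :=
    fun t => hlc.apply_eq_of_preconnectedSpace t 0
  constructor
  · intro t
    have : γ t ∈ W ⊔ Submodule.span ℂ {γ t} :=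
      Submodule.mem_sup_right (Submodule.mem_span_singleton_self _)
    rwa [hP t] at this
  · have h0 : γ 0 ≠ 0 := fun h => hW 0 (h ▸ W.zero_mem)
    have hfr := Submodule.finrank_sup_add_finrank_inf_eq W (Submodule.span ℂ {γ 0})
    rw [finrank_span_singleton h0] at hfr
    omega
end

section
/- Let V be a 5-dimensional complex normed vector space (so P(V) = P⁴), W ⊆ V a 3-dimensional ℂ-linear subspace (a plane π in P⁴), and γ : ℝ → V a differentiable map with γ(t) ∉ W for every t. If for every t ∈ ℝ the tangent line span_ℂ{γ(t), deriv γ t} has nonzero intersection with W, then there exists a 4-dimensional ℂ-linear subspace U ⊆ V (a hyperplane H of P⁴) with W ≤ U and γ(t) ∈ U for every t ∈ ℝ; indeed one may take U = W ⊔ span_ℂ{γ(0)}. -/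
open Module Metric

/-- From the tangent-line condition we extract, at each time `t`, a scalar `c` with
`deriv γ t + c • γ t ∈ W`. -/
lemma tangent_scalar {V : Type*} [NormedAddCommGroup V] [NormedSpace ℂ V]
    (W : Submodule ℂ V) {γ : ℝ → V}
    (hW : ∀ t : ℝ, γ t ∉ W)
    (htan : ∀ t : ℝ, Submodule.span ℂ {γ t, deriv γ t} ⊓ W ≠ ⊥) :
    ∀ t : ℝ, ∃ c : ℂ, deriv γ t + c • γ t ∈ W := by
  intro t
  obtain ⟨x, hx, hx0⟩ := Submodule.exists_mem_ne_zero_of_ne_bot (htan t)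
  obtain ⟨hxs, hxW⟩ := Submodule.mem_inf.mp hx
  obtain ⟨a, b, hab⟩ := Submodule.mem_span_pair.mp hxs
  by_cases hb : b = 0
  · exfalso
    subst hb
    rw [zero_smul, add_zero] at hab
    have ha : a ≠ 0 := by rintro rfl; rw [zero_smul] at hab; exact hx0 hab.symm
    have : γ t ∈ W := by
      have := W.smul_mem a⁻¹ hxW
      rwa [← hab, smul_smul, inv_mul_cancel₀ ha, one_smul] at this
    exact hW t this
  · refine ⟨a / b, ?_⟩
    have : deriv γ t + (a / b) • γ t = b⁻¹ • x := by
      rw [← hab, smul_add, smul_smul, smul_smul, inv_mul_cancel₀ hb, one_smul,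
        div_eq_inv_mul, mul_comm, add_comm]
    rw [this]
    exact W.smul_mem _ hxW

/-- A curve in `P⁴` (given by a differentiable `γ : ℝ → V` with `dim V = 5`) avoiding a
plane `π = P(W)` (with `dim W = 3`) and all of whose tangent lines meet `π` is contained
in a hyperplane `H = P(U)` (with `dim U = 4`) through `π`; indeed one may take
`U = W ⊔ span ℂ {γ 0}`. -/
theorem curve_in_hyperplane_of_tangents_meet_plane
    {V : Type*} [NormedAddCommGroup V] [NormedSpace ℂ V] [FiniteDimensional ℂ V]
    (hV : Module.finrank ℂ V = 5)
    (W : Submodule ℂ V) (hWdim : Module.finrank ℂ W = 3)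
    (γ : ℝ → V) (hγ : Differentiable ℝ γ)
    (hW : ∀ t : ℝ, γ t ∉ W)
    (htan : ∀ t : ℝ, Submodule.span ℂ {γ t, deriv γ t} ⊓ W ≠ ⊥) :
    ∃ U : Submodule ℂ V, U = W ⊔ Submodule.span ℂ {γ 0} ∧
      Module.finrank ℂ U = 4 ∧ W ≤ U ∧ ∀ t : ℝ, γ t ∈ U := by
  have hc := tangent_scalar W hW htan
  set U : Submodule ℂ V := W ⊔ Submodule.span ℂ {γ 0} with hUdef
  -- `γ 0 ≠ 0`
  have hγ0ne : γ 0 ≠ 0 := fun h => hW 0 (h ▸ W.zero_mem)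
  -- dimension of `U`
  have hdisj : W ⊓ Submodule.span ℂ {γ 0} = ⊥ := by
    rw [← disjoint_iff]
    exact (Submodule.disjoint_span_singleton' hγ0ne).mpr (hW 0)
  have hUdim : finrank ℂ U = 4 := by
    have := Submodule.finrank_sup_add_finrank_inf_eq W (Submodule.span ℂ {γ 0})
    rw [hdisj, finrank_bot, add_zero, hWdim, finrank_span_singleton hγ0ne] at this
    exact this
  -- a functional `ψ` with kernel exactly `U`
  have hUne : U ≠ ⊤ := by
    intro h
    rw [h, finrank_top, hV] at hUdim
    norm_num at hUdim
  obtain ⟨z, hz⟩ : ∃ z : V, z ∉ U := by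
    by_contra h
    push_neg at h
    exact hUne (Submodule.eq_top_iff'.mpr h)
  obtain ⟨ψ, hψz, hψU⟩ := U.exists_dual_map_eq_bot_of_notMem hz inferInstance
  have hψU' : ∀ y ∈ U, ψ y = 0 := fun y hy => by
    have : ψ y ∈ U.map ψ := Submodule.mem_map_of_mem hy
    rwa [hψU, Submodule.mem_bot] at this
  have hUker : U = LinearMap.ker ψ := by
    have hle : U ≤ LinearMap.ker ψ := fun y hy => LinearMap.mem_ker.mpr (hψU' y hy)
    have hψsurj : Function.Surjective ψ := by
      intro c
      refine ⟨(c / ψ z) • z, ?_⟩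
      rw [map_smul, smul_eq_mul, div_mul_cancel₀ _ hψz]
    have hker : finrank ℂ (LinearMap.ker ψ) = 4 := by
      have := LinearMap.finrank_range_add_finrank_ker ψ
      rw [LinearMap.range_eq_top.mpr hψsurj, finrank_top, hV] at this
      have h1 : finrank ℂ ℂ = 1 := finrank_self ℂ
      omega
    exact Submodule.eq_of_le_of_finrank_eq hle (by rw [hUdim, hker])
  -- continuity of `γ` and the clopen set `S`
  have hγc : Continuous γ := hγ.continuous
  set S : Set ℝ := {t | γ t ∈ U} with hSdef
  have hUclosed : IsClosed (U : Set V) := U.closed_of_finiteDimensional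
  have hSclosed : IsClosed S := hUclosed.preimage hγc
  -- derivative of functionals composed with γ
  have hasDeriv : ∀ (χ : Module.Dual ℂ V) (t : ℝ),
      HasDerivAt (fun t => χ (γ t)) (χ (deriv γ t)) t := by
    intro χ t
    have h1 : HasDerivAt γ (deriv γ t) t := (hγ t).hasDerivAt
    have h2 := ((LinearMap.toContinuousLinearMap χ).restrictScalars
      ℝ).hasFDerivAt.comp_hasDerivAt t h1
    exact h2
  have hSopen : IsOpen S := by
    rw [Metric.isOpen_iff]
    intro s hs
    -- a functional `φ` vanishing on `W` with `φ (γ s) ≠ 0`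
    obtain ⟨φ, hφs, hφW⟩ := W.exists_dual_map_eq_bot_of_notMem (hW s) inferInstance
    have hφW' : ∀ y ∈ W, φ y = 0 := fun y hy => by
      have : φ y ∈ W.map φ := Submodule.mem_map_of_mem hy
      rwa [hφW, Submodule.mem_bot] at this
    set u : ℝ → ℂ := fun t => ψ (γ t) with hu
    set v : ℝ → ℂ := fun t => φ (γ t) with hv
    -- the Wronskian-type identity
    have hwr : ∀ t : ℝ, ψ (deriv γ t) * v t - u t * φ (deriv γ t) = 0 := by
      intro t
      obtain ⟨c, hcW⟩ := hc t
      have h1 : ψ (deriv γ t) = -c * u t := by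
        have := hψU' _ (le_sup_left (a := W) (b := Submodule.span ℂ {γ 0}) hcW)
        rw [map_add, map_smul, smul_eq_mul] at this
        rw [hu]; linear_combination this
      have h2 : φ (deriv γ t) = -c * v t := by
        have := hφW' _ hcW
        rw [map_add, map_smul, smul_eq_mul] at this
        rw [hv]; linear_combination this
      rw [h1, h2]; ring
    -- `v` is nonzero near `s`
    have hvcont : Continuous v := by
      exact ((LinearMap.toContinuousLinearMap φ).continuous).comp hγc
    have hvs : v s ≠ 0 := hφs
    have : IsOpen {t : ℝ | v t ≠ 0} := isOpen_compl_singleton.preimage hvcont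
    obtain ⟨ε, hε, hball⟩ := Metric.isOpen_iff.mp this s hvs
    refine ⟨ε, hε, ?_⟩
    -- on the ball, `u / v` has zero derivative
    set q : ℝ → ℂ := fun t => u t / v t with hq
    have hqderiv : ∀ t ∈ ball s ε, HasDerivAt q 0 t := by
      intro t ht
      have hvt : v t ≠ 0 := hball ht
      have h1 : HasDerivAt u (ψ (deriv γ t)) t := hasDeriv ψ t
      have h2 : HasDerivAt v (φ (deriv γ t)) t := hasDeriv φ t
      have h3 := h1.div h2 hvt
      have h4 : (ψ (deriv γ t) * v t - u t * φ (deriv γ t)) / v t ^ 2 = 0 := by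
        rw [hwr t, zero_div]
      rwa [h4] at h3
    have hconst : ∀ t ∈ ball s ε, q t = q s := by
      intro t ht
      refine (convex_ball s ε).is_const_of_fderivWithin_eq_zero
        (fun x hx => ((hqderiv x hx).differentiableAt).differentiableWithinAt)
        (fun x hx => ?_) ht (mem_ball_self hε)
      rw [fderivWithin_of_isOpen isOpen_ball hx]
      have := (hqderiv x hx).hasFDerivAt.fderiv
      rw [this]
      ext
      simp
    have hqs : q s = 0 := by
      have hus : u s = 0 := hψU' _ hs
      rw [hq]; simp only [hus, zero_div]
    intro t ht
    have hqt : q t = 0 := by rw [hconst t ht, hqs]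
    have hut : u t = 0 := by
      have hvt : v t ≠ 0 := hball ht
      rw [hq] at hqt
      exact (div_eq_zero_iff.mp hqt).resolve_right hvt
    show γ t ∈ U
    rw [hUker]
    exact LinearMap.mem_ker.mpr hut
  -- conclude via connectedness of ℝ
  have hS0 : (0 : ℝ) ∈ S := by
    show γ 0 ∈ U
    exact Submodule.mem_sup_right (Submodule.mem_span_singleton_self (γ 0))
  have hSuniv : S = Set.univ := IsClopen.eq_univ ⟨hSclosed, hSopen⟩ ⟨0, hS0⟩
  refine ⟨U, rfl, hUdim, le_sup_left, fun t => ?_⟩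
  have : t ∈ S := hSuniv ▸ Set.mem_univ t
  exact this
end

section
/- Let V be a 4-dimensional complex normed vector space (so P(V) = P³), L ⊆ V a 2-dimensional ℂ-linear subspace (a line ℓ in P³), and γ : ℝ → V a differentiable map with γ(t) ∉ L for every t. If for every t ∈ ℝ the tangent line span_ℂ{γ(t), deriv γ t} has nonzero intersection with L, then there exists a 3-dimensional ℂ-linear subspace U ⊆ V (a plane π′ of P³) with L ≤ U and γ(t) ∈ U for every t ∈ ℝ; indeed one may take U = L ⊔ span_ℂ{γ(0)}. -/
open Submodule Metric Set


/-- A curve in `P³` (given by a differentiable `γ : ℝ → V` with `dim V = 4`) avoiding a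
line `ℓ = P(L)` (with `dim L = 2`) and all of whose tangent lines meet `ℓ` is contained
in a plane `π′ = P(U)` (with `dim U = 3`) through `ℓ`; indeed one may take
`U = L ⊔ span ℂ {γ 0}`. -/
theorem curve_in_plane_of_tangents_meet_line_P3
    {V : Type*} [NormedAddCommGroup V] [NormedSpace ℂ V] [FiniteDimensional ℂ V]
    (hV : Module.finrank ℂ V = 4)
    (L : Submodule ℂ V) (hLdim : Module.finrank ℂ L = 2)
    (γ : ℝ → V) (hγ : Differentiable ℝ γ)
    (hL : ∀ t : ℝ, γ t ∉ L)
    (htan : ∀ t : ℝ, Submodule.span ℂ {γ t, deriv γ t} ⊓ L ≠ ⊥) :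
    ∃ U : Submodule ℂ V, U = L ⊔ Submodule.span ℂ {γ 0} ∧
      Module.finrank ℂ U = 3 ∧ L ≤ U ∧ ∀ t : ℝ, γ t ∈ U := by
  classical
  have hγ0 : γ 0 ∉ L := hL 0
  have hγ0ne : γ 0 ≠ 0 := fun h => hγ0 (h ▸ L.zero_mem)
  set U : Submodule ℂ V := L ⊔ Submodule.span ℂ {γ 0} with hUdef
  have hLU : L ≤ U := le_sup_left
  have hγ0U : γ 0 ∈ U := Submodule.mem_sup_right (Submodule.mem_span_singleton_self _)
  -- finrank U = 3
  have hinf : L ⊓ Submodule.span ℂ {γ 0} = ⊥ := by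
    rw [eq_bot_iff]
    intro x hx
    obtain ⟨hxL, hxS⟩ := Submodule.mem_inf.1 hx
    obtain ⟨c, rfl⟩ := Submodule.mem_span_singleton.1 hxS
    rcases eq_or_ne c 0 with rfl | hc
    · simp
    · exfalso
      have h2 := L.smul_mem c⁻¹ hxL
      rw [smul_smul, inv_mul_cancel₀ hc, one_smul] at h2
      exact hγ0 h2
  have hrU : Module.finrank ℂ U = 3 := by
    have h1 : Module.finrank ℂ (Submodule.span ℂ {γ 0}) = 1 :=
      finrank_span_singleton hγ0ne
    have h2 := Submodule.finrank_sup_add_finrank_inf_eq L (Submodule.span ℂ {γ 0})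
    rw [hinf, hLdim, h1] at h2
    simpa using h2
  -- a functional ψ with kernel U
  have hq : Module.finrank ℂ (V ⧸ U) = 1 := by
    have h3 := Submodule.finrank_quotient_add_finrank U
    rw [hrU, hV] at h3
    omega
  have hqC : Module.finrank ℂ (V ⧸ U) = Module.finrank ℂ ℂ := by
    simpa using hq
  let e : (V ⧸ U) ≃ₗ[ℂ] ℂ := LinearEquiv.ofFinrankEq _ _ hqC
  let ψ : V →L[ℂ] ℂ := LinearMap.toContinuousLinearMap (e.toLinearMap ∘ₗ U.mkQ)
  have hψmem : ∀ x : V, ψ x = 0 ↔ x ∈ U := by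
    intro x
    have h : ψ x = e (U.mkQ x) := rfl
    rw [h, (map_eq_zero_iff e e.injective), Submodule.mkQ_apply,
      Submodule.Quotient.mk_eq_zero]
  have hψL : ∀ x ∈ L, ψ x = 0 := fun x hx => (hψmem x).2 (hLU hx)
  -- tangent condition: deriv γ t - c • γ t ∈ L for some c
  have hderiv : ∀ t : ℝ, ∃ c : ℂ, deriv γ t - c • γ t ∈ L := by
    intro t
    obtain ⟨v, hv, hv0⟩ := (Submodule.ne_bot_iff _).1 (htan t)
    obtain ⟨hvs, hvL⟩ := Submodule.mem_inf.1 hv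
    obtain ⟨m, n, hmn⟩ := Submodule.mem_span_pair.1 hvs
    rcases eq_or_ne n 0 with rfl | hn
    · exfalso
      have hm : m ≠ 0 := by
        rintro rfl
        simp at hmn
        exact hv0 hmn.symm
      have h2 : γ t ∈ L := by
        have h3 := L.smul_mem m⁻¹ hvL
        rw [← hmn] at h3
        simpa [smul_smul, inv_mul_cancel₀ hm] using h3
      exact hL t h2
    · refine ⟨-(m / n), ?_⟩
      have h4 : deriv γ t - (-(m / n)) • γ t = n⁻¹ • v := by
        have h2 : n • deriv γ t = v - m • γ t := by
          rw [← hmn]; abel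
        have h5 : deriv γ t = n⁻¹ • (v - m • γ t) := by
          rw [← h2, smul_smul, inv_mul_cancel₀ hn, one_smul]
        rw [h5]
        match_scalars <;> field_simp <;> ring
      rw [h4]
      exact L.smul_mem _ hvL
  -- clopen argument
  have hUclosed : IsClosed (U : Set V) := Submodule.closed_of_finiteDimensional U
  have hSclosed : IsClosed (γ ⁻¹' (U : Set V)) := hUclosed.preimage hγ.continuous
  have hSopen : IsOpen (γ ⁻¹' (U : Set V)) := by
    rw [Metric.isOpen_iff]
    intro t₀ ht₀
    -- a functional φ vanishing on L but not at γ t₀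
    have hmk : L.mkQ (γ t₀) ≠ 0 := by
      simpa [Submodule.Quotient.mk_eq_zero] using hL t₀
    obtain ⟨φ₀, hφ₀⟩ : ∃ φ₀ : Module.Dual ℂ (V ⧸ L), φ₀ (L.mkQ (γ t₀)) ≠ 0 := by
      by_contra hcon
      push_neg at hcon
      exact hmk ((Module.forall_dual_apply_eq_zero_iff ℂ _).1 hcon)
    set φ : V →L[ℂ] ℂ := LinearMap.toContinuousLinearMap (φ₀ ∘ₗ L.mkQ) with hφdef
    have hφL : ∀ x ∈ L, φ x = 0 := by
      intro x hx
      show φ₀ (L.mkQ x) = 0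
      rw [Submodule.mkQ_apply, (Submodule.Quotient.mk_eq_zero L).2 hx, map_zero]
    have hφt₀ : φ (γ t₀) ≠ 0 := hφ₀
    -- derivatives of ψ ∘ γ and φ ∘ γ
    have haψ : ∀ x : ℝ, HasDerivAt (fun s => ψ (γ s)) (ψ (deriv γ x)) x := fun x =>
      ((ψ.restrictScalars ℝ).hasFDerivAt.comp_hasDerivAt x (hγ x).hasDerivAt)
    have haφ : ∀ x : ℝ, HasDerivAt (fun s => φ (γ s)) (φ (deriv γ x)) x := fun x =>
      ((φ.restrictScalars ℝ).hasFDerivAt.comp_hasDerivAt x (hγ x).hasDerivAt)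
    -- a ball on which φ (γ t) ≠ 0
    have hcont : Continuous fun t => φ (γ t) := φ.continuous.comp hγ.continuous
    have hO : IsOpen {t : ℝ | φ (γ t) ≠ 0} :=
      (isOpen_ne : IsOpen {x : ℂ | x ≠ 0}).preimage hcont
    obtain ⟨ε, hε, hball⟩ := Metric.isOpen_iff.1 hO t₀ hφt₀
    refine ⟨ε, hε, ?_⟩
    intro t ht
    -- the ratio ψ(γ)/φ(γ) has vanishing derivative on the ball
    have hder : ∀ x ∈ ball t₀ ε,
        HasDerivWithinAt (fun s => ψ (γ s) / φ (γ s)) 0 (ball t₀ ε) x := by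
      intro x hx
      obtain ⟨c, hc⟩ := hderiv x
      have hψv : ψ (deriv γ x) = c * ψ (γ x) := by
        have h6 : ψ (deriv γ x) - c * ψ (γ x) = 0 := by
          simpa [map_sub, map_smul, smul_eq_mul] using hψL _ hc
        exact sub_eq_zero.1 h6
      have hφv : φ (deriv γ x) = c * φ (γ x) := by
        have h6 : φ (deriv γ x) - c * φ (γ x) = 0 := by
          simpa [map_sub, map_smul, smul_eq_mul] using hφL _ hc
        exact sub_eq_zero.1 h6
      have hφx : φ (γ x) ≠ 0 := hball hx
      have hdiv := (haψ x).div (haφ x) hφx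
      rw [hψv, hφv] at hdiv
      have hz : (c * ψ (γ x) * φ (γ x) - ψ (γ x) * (c * φ (γ x))) / φ (γ x) ^ 2 = 0 := by
        ring
      rw [hz] at hdiv
      exact hdiv.hasDerivWithinAt
    have hval := (convex_ball t₀ ε).norm_image_sub_le_of_norm_hasDerivWithin_le (C := 0)
      hder (fun x _ => by simp) (mem_ball_self hε) ht
    have heq : ψ (γ t) / φ (γ t) = ψ (γ t₀) / φ (γ t₀) := by
      have : ‖ψ (γ t) / φ (γ t) - ψ (γ t₀) / φ (γ t₀)‖ ≤ 0 := by
        simpa using hval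
      have h7 := norm_le_zero_iff.1 this
      exact sub_eq_zero.1 h7
    have hψt₀ : ψ (γ t₀) = 0 := (hψmem _).2 ht₀
    have : ψ (γ t) / φ (γ t) = 0 := by rw [heq, hψt₀, zero_div]
    have hψt : ψ (γ t) = 0 := by
      rcases div_eq_zero_iff.1 this with h | h
      · exact h
      · exact absurd h (hball ht)
    exact (hψmem _).1 hψt
  have hS : γ ⁻¹' (U : Set V) = Set.univ :=
    IsClopen.eq_univ ⟨hSclosed, hSopen⟩ ⟨0, hγ0U⟩
  exact ⟨U, rfl, hrU, hLU, fun t => (Set.eq_univ_iff_forall.1 hS t : _)⟩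
end

section
/- Let V be a 5-dimensional complex vector space, W ⊆ V a 3-dimensional ℂ-linear subspace (a plane π in P⁴), and o ∈ V with o ∉ W (the vertex O of a cone, not lying on π). Let γ : ℝ → V be a differentiable map, and suppose that for every t ∈ ℝ the subspace span_ℂ{o, γ(t), deriv γ t} (the tangent plane of the cone over γ with vertex o) satisfies finrank(span_ℂ{o, γ(t), deriv γ t} ⊓ W) ≥ 2, i.e. it meets W in (at least) a line. Then for every t ∈ ℝ, γ(t) ∈ W ⊔ span_ℂ{o}; in particular the vertex o and the whole cone over γ lie in the 4-dimensional subspace W ⊔ span_ℂ{o}, a hyperplane of P⁴ containing the plane π. -/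
/-- The cone case: if the tangent planes `span ℂ {o, γ t, deriv γ t}` of the cone with
vertex `o ∉ W` over a differentiable curve `γ : ℝ → V` (`dim V = 5`, `dim W = 3`) all
meet `W` in at least a line, then the whole cone lies in the `4`-dimensional subspace
`W ⊔ span ℂ {o}`, a hyperplane of `P⁴` containing the plane `P(W)`. -/
theorem cone_in_hyperplane_of_tangent_planes_meet_plane_in_lines
    {V : Type*} [NormedAddCommGroup V] [NormedSpace ℂ V] [FiniteDimensional ℂ V]
    (hV : Module.finrank ℂ V = 5)
    (W : Submodule ℂ V) (hWdim : Module.finrank ℂ W = 3)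
    (o : V) (ho : o ∉ W)
    (γ : ℝ → V) (hγ : Differentiable ℝ γ)
    (htan : ∀ t : ℝ,
      2 ≤ Module.finrank ℂ ↥(Submodule.span ℂ {o, γ t, deriv γ t} ⊓ W)) :
    Module.finrank ℂ ↥(W ⊔ Submodule.span ℂ {o}) = 4 ∧
      ∀ t : ℝ, γ t ∈ W ⊔ Submodule.span ℂ {o} := by
  have ho0 : o ≠ 0 := fun h => ho (h ▸ W.zero_mem)
  -- dim (W ⊔ span{o}) = 4
  have hinf : W ⊓ Submodule.span ℂ {o} = ⊥ := by
    rw [Submodule.eq_bot_iff]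
    rintro x ⟨hxW, hxo⟩
    rcases Submodule.mem_span_singleton.mp hxo with ⟨c, rfl⟩
    rcases eq_or_ne c 0 with rfl | hc
    · simp
    · exact absurd (W.smul_mem c⁻¹ hxW) (by simpa [smul_smul, inv_mul_cancel₀ hc] using ho)
  have hspo : Module.finrank ℂ ↥(Submodule.span ℂ {o}) = 1 :=
    finrank_span_singleton ho0
  have hU : Module.finrank ℂ ↥(W ⊔ Submodule.span ℂ {o}) = 4 := by
    have := Submodule.finrank_sup_add_finrank_inf_eq W (Submodule.span ℂ {o})
    rw [hinf] at this
    simp [hWdim, hspo, finrank_bot] at this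
    omega
  refine ⟨hU, fun t => ?_⟩
  set T : Submodule ℂ V := Submodule.span ℂ {o, γ t, deriv γ t} with hT
  classical
  have hTdim : Module.finrank ℂ T ≤ 3 := by
    have : ({o, γ t, deriv γ t} : Set V) = ↑({o, γ t, deriv γ t} : Finset V) := by simp
    rw [hT, this]
    refine le_trans (finrank_span_finset_le_card _) ?_
    refine le_trans (Finset.card_insert_le _ _) ?_
    have := Finset.card_insert_le (γ t) ({deriv γ t} : Finset V)
    simp at this ⊢
    omega
  have hsup : Module.finrank ℂ ↥(T ⊔ W) ≤ 4 := by
    have := Submodule.finrank_sup_add_finrank_inf_eq T W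
    have h2 := htan t
    rw [← hT] at h2
    omega
  have hUle : W ⊔ Submodule.span ℂ {o} ≤ T ⊔ W := by
    refine sup_le le_sup_right ?_
    rw [Submodule.span_le]
    intro x hx
    rcases hx with rfl
    exact Submodule.mem_sup_left (Submodule.subset_span (by simp))
  have heq : W ⊔ Submodule.span ℂ {o} = T ⊔ W :=
    Submodule.eq_of_le_of_finrank_le hUle (by omega)
  have hγT : γ t ∈ T := Submodule.subset_span (by simp)
  rw [heq]
  exact Submodule.mem_sup_left hγT
end

section
/- Let V be a 5-dimensional complex normed vector space, W ⊆ V a 3-dimensional ℂ-linear subspace (a plane π in P⁴), and γ : ℝ → V a twice differentiable map with γ(t) ∉ W for every t. Suppose that for every t ∈ ℝ the osculating plane A(t) = span_ℂ{γ(t), deriv γ t, deriv (deriv γ) t} satisfies finrank(A(t) ⊓ W) ≥ 2, i.e. it meets W in (at least) a line. Then for every t ∈ ℝ both γ(t) and deriv γ t lie in the 4-dimensional-at-most subspace U = W ⊔ span_ℂ{γ(0)}; in particular the curve γ and its tangent developable surface (the union of its tangent lines) are contained in a hyperplane of P⁴ containing the plane π. -/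
open Module Submodule

private lemma finrank_sup_le' {V : Type*} [AddCommGroup V] [Module ℂ V]
    [FiniteDimensional ℂ V] (p q : Submodule ℂ V) :
    finrank ℂ ↥(p ⊔ q) ≤ finrank ℂ p + finrank ℂ q := by
  have := Submodule.finrank_sup_add_finrank_inf_eq p q
  omega

private lemma finrank_span_single_le {V : Type*} [AddCommGroup V] [Module ℂ V]
    [FiniteDimensional ℂ V] (x : V) :
    finrank ℂ ↥(Submodule.span ℂ ({x} : Set V)) ≤ 1 := by
  simpa using finrank_span_le_card (R := ℂ) ({x} : Set V)

/-- Linear algebra step: the osculating condition forces the derivative into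
`W ⊔ span {x}`. -/
private lemma lemA {V : Type*} [AddCommGroup V] [Module ℂ V] [FiniteDimensional ℂ V]
    (hV : finrank ℂ V = 5) (W : Submodule ℂ V) (hW3 : finrank ℂ W = 3)
    (x y z : V) (hx : x ∉ W)
    (h2 : 2 ≤ finrank ℂ ↥(Submodule.span ℂ ({x, y, z} : Set V) ⊓ W)) :
    y ∈ W ⊔ Submodule.span ℂ ({x} : Set V) := by
  set A := Submodule.span ℂ ({x, y, z} : Set V) with hA
  have hAle : finrank ℂ A ≤ 3 := by
    have h1 : A = Submodule.span ℂ {x} ⊔ (Submodule.span ℂ {y} ⊔ Submodule.span ℂ {z}) := by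
      rw [hA]
      rw [show ({x, y, z} : Set V) = insert x (insert y {z}) from rfl]
      rw [Submodule.span_insert, Submodule.span_insert]
    calc finrank ℂ A ≤ finrank ℂ ↥(Submodule.span ℂ ({x} : Set V)) +
          finrank ℂ ↥(Submodule.span ℂ {y} ⊔ Submodule.span ℂ ({z} : Set V)) := by
            rw [h1]; exact finrank_sup_le' _ _
      _ ≤ 1 + (1 + 1) := by
          refine add_le_add (finrank_span_single_le x) ?_
          calc finrank ℂ ↥(Submodule.span ℂ ({y} : Set V) ⊔ Submodule.span ℂ {z})
              ≤ _ + _ := finrank_sup_le' _ _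
            _ ≤ 1 + 1 := add_le_add (finrank_span_single_le y) (finrank_span_single_le z)
      _ = 3 := rfl
  -- W ⊓ span {x} = ⊥
  have hinf : W ⊓ Submodule.span ℂ ({x} : Set V) = ⊥ := by
    rw [eq_bot_iff]
    rintro v ⟨hvW, hvx⟩
    obtain ⟨c, rfl⟩ := Submodule.mem_span_singleton.mp hvx
    rcases eq_or_ne c 0 with rfl | hc
    · simp
    · exact absurd (by simpa [smul_smul, inv_mul_cancel₀ hc] using W.smul_mem c⁻¹ hvW) hx
  have hUdim : finrank ℂ ↥(W ⊔ Submodule.span ℂ ({x} : Set V)) = 4 := by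
    have h := Submodule.finrank_sup_add_finrank_inf_eq W (Submodule.span ℂ ({x} : Set V))
    rw [hinf] at h
    have hx0 : x ≠ 0 := fun h0 => hx (h0 ▸ W.zero_mem)
    rw [finrank_span_singleton hx0] at h
    simp [hW3] at h
    omega
  have hAWdim : finrank ℂ ↥(W ⊔ A) ≤ 4 := by
    have h := Submodule.finrank_sup_add_finrank_inf_eq A W
    rw [sup_comm] at h
    omega
  have hle : W ⊔ Submodule.span ℂ ({x} : Set V) ≤ W ⊔ A := by
    refine sup_le_sup_left ?_ W
    exact Submodule.span_mono (by simp)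
  have heq : W ⊔ Submodule.span ℂ ({x} : Set V) = W ⊔ A :=
    Submodule.eq_of_le_of_finrank_le hle (by omega)
  have hyA : y ∈ A := Submodule.subset_span (by simp)
  rw [heq]
  exact Submodule.mem_sup_right hyA

/-- ODE step: a nonvanishing differentiable curve with continuous derivative
everywhere parallel to itself stays on a fixed complex line. -/
private lemma lemB {Y : Type*} [NormedAddCommGroup Y] [InnerProductSpace ℂ Y]
    (g : ℝ → Y) (hg : Differentiable ℝ g) (hg' : Continuous (deriv g))
    (h0 : ∀ t, g t ≠ 0) (hspan : ∀ t, deriv g t ∈ Submodule.span ℂ ({g t} : Set Y)) :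
    ∀ t, g t ∈ Submodule.span ℂ ({g 0} : Set Y) := by
  set lam : ℝ → ℂ := fun t => inner ℂ (g t) (deriv g t) / ((‖g t‖ : ℂ) ^ 2) with hlam
  have hnorm_ne : ∀ t, ((‖g t‖ : ℂ) ^ 2) ≠ 0 := fun t => by
    simp [pow_eq_zero_iff, h0 t]
  have hlam_cont : Continuous lam := by
    apply Continuous.div
    · exact continuous_inner.comp (hg.continuous.prodMk hg')
    · exact (Complex.continuous_ofReal.comp (hg.continuous.norm)).pow 2
    · exact hnorm_ne
  have key : ∀ t, deriv g t = lam t • g t := by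
    intro t
    obtain ⟨c, hc⟩ := Submodule.mem_span_singleton.mp (hspan t)
    have hlamc : lam t = c := by
      rw [hlam]
      simp only [← hc, inner_smul_right, inner_self_eq_norm_sq_to_K]
      exact mul_div_cancel_right₀ c (hnorm_ne t)
    rw [hlamc, hc]
  set Λ : ℝ → ℂ := fun t => ∫ s in (0:ℝ)..t, lam s with hΛdef
  have hΛ : ∀ t, HasDerivAt Λ (lam t) t := by
    intro t
    exact intervalIntegral.integral_hasDerivAt_right
      (hlam_cont.intervalIntegrable _ _)
      (hlam_cont.stronglyMeasurableAtFilter _ _)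
      hlam_cont.continuousAt
  set h : ℝ → Y := fun t => Complex.exp (-Λ t) • g t with hhdef
  have hh : ∀ t, HasDerivAt h 0 t := by
    intro t
    have h1 : HasDerivAt (fun t => Complex.exp (-Λ t))
        (Complex.exp (-Λ t) * (-lam t)) t := ((hΛ t).neg).cexp
    have h2 : HasDerivAt g (deriv g t) t := (hg t).hasDerivAt
    have h3 := h1.smul h2
    convert h3 using 1
    · rfl
    rw [key t, smul_smul, ← add_smul]
    ring_nf
    simp
  have hconst : ∀ t, h t = h 0 :=
    fun t => is_const_of_deriv_eq_zero (fun s => (hh s).differentiableAt)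
      (fun s => (hh s).deriv) t 0
  intro t
  have hΛ0 : Λ 0 = 0 := by simp [hΛdef]
  have h00 : h 0 = g 0 := by simp [hhdef, hΛ0]
  have hct := hconst t
  rw [h00, hhdef] at hct
  have : g t = Complex.exp (Λ t) • g 0 := by
    rw [← hct, smul_smul, ← Complex.exp_add]
    simp
  rw [this]
  exact Submodule.mem_span_singleton.mpr ⟨_, rfl⟩

/-- The tangent-developable case: if a twice differentiable curve `γ : ℝ → V`
(`dim V = 5`) avoids a `3`-dimensional subspace `W` and all of its osculating planes
`span ℂ {γ t, deriv γ t, deriv (deriv γ) t}` meet `W` in at least a line, then the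
curve and all of its tangent lines lie in `U = W ⊔ span ℂ {γ 0}`, a subspace of
dimension at most `4` containing `W` (a hyperplane of `P⁴` through the plane `P(W)`). -/
theorem tangent_developable_in_hyperplane_of_osculating_planes_meet_plane_in_lines
    {V : Type*} [NormedAddCommGroup V] [NormedSpace ℂ V] [FiniteDimensional ℂ V]
    (hV : Module.finrank ℂ V = 5)
    (W : Submodule ℂ V) (hWdim : Module.finrank ℂ W = 3)
    (γ : ℝ → V) (hγ : Differentiable ℝ γ) (hγ' : Differentiable ℝ (deriv γ))
    (hW : ∀ t : ℝ, γ t ∉ W)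
    (hosc : ∀ t : ℝ,
      2 ≤ Module.finrank ℂ
        ↥(Submodule.span ℂ {γ t, deriv γ t, deriv (deriv γ) t} ⊓ W)) :
    Module.finrank ℂ ↥(W ⊔ Submodule.span ℂ {γ 0}) ≤ 4 ∧
      ∀ t : ℝ, γ t ∈ W ⊔ Submodule.span ℂ {γ 0} ∧
        deriv γ t ∈ W ⊔ Submodule.span ℂ {γ 0} := by
  -- Step 1: tangent lines lie in the moving hyperplane W ⊔ span {γ t}
  have step1 : ∀ t : ℝ, deriv γ t ∈ W ⊔ Submodule.span ℂ ({γ t} : Set V) :=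
    fun t => lemA hV W hWdim _ _ _ (hW t) (hosc t)
  -- Build a linear map to ℂ² with kernel W
  have hQ : finrank ℂ (V ⧸ W) = 2 := by
    have := Submodule.finrank_quotient_add_finrank W
    omega
  have hY : finrank ℂ (EuclideanSpace ℂ (Fin 2)) = 2 := by simp
  let e : (V ⧸ W) ≃ₗ[ℂ] EuclideanSpace ℂ (Fin 2) :=
    LinearEquiv.ofFinrankEq _ _ (hQ.trans hY.symm)
  let F : V →ₗ[ℂ] EuclideanSpace ℂ (Fin 2) := e.toLinearMap.comp W.mkQ
  have hkerF : LinearMap.ker F = W := by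
    rw [LinearMap.ker_comp, LinearEquiv.ker, Submodule.comap_bot, Submodule.ker_mkQ]
  let Fc : V →L[ℂ] EuclideanSpace ℂ (Fin 2) := LinearMap.toContinuousLinearMap F
  have hFc : ∀ v, Fc v = F v := fun v => rfl
  set g : ℝ → EuclideanSpace ℂ (Fin 2) := fun t => Fc (γ t) with hgdef
  have hder : ∀ t, HasDerivAt g (Fc (deriv γ t)) t := by
    intro t
    exact ((Fc.restrictScalars ℝ).hasFDerivAt).comp_hasDerivAt t (hγ t).hasDerivAt
  have hderiv_g : deriv g = fun t => Fc (deriv γ t) := funext fun t => (hder t).deriv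
  have hgdiff : Differentiable ℝ g := fun t => (hder t).differentiableAt
  have hg'cont : Continuous (deriv g) := by
    rw [hderiv_g]
    exact Fc.continuous.comp hγ'.continuous
  have h0 : ∀ t, g t ≠ 0 := by
    intro t h
    apply hW t
    rw [← hkerF]
    exact (LinearMap.mem_ker).mpr (by rw [← hFc]; exact h)
  have hFsup : ∀ t (x : V), x ∈ W ⊔ Submodule.span ℂ ({γ t} : Set V) →
      Fc x ∈ Submodule.span ℂ ({g t} : Set (EuclideanSpace ℂ (Fin 2))) := by
    intro t x hx
    obtain ⟨w, hw, z, hz, rfl⟩ := Submodule.mem_sup.mp hx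
    obtain ⟨c, rfl⟩ := Submodule.mem_span_singleton.mp hz
    have hwF : Fc w = 0 := by
      rw [hFc]
      exact (LinearMap.mem_ker).mp (hkerF ▸ hw)
    rw [map_add, hwF, zero_add, map_smul]
    exact Submodule.mem_span_singleton.mpr ⟨c, rfl⟩
  have hspan : ∀ t, deriv g t ∈ Submodule.span ℂ ({g t} : Set (EuclideanSpace ℂ (Fin 2))) := by
    intro t
    rw [hderiv_g]
    exact hFsup t _ (step1 t)
  have hg0 : ∀ t, g t ∈ Submodule.span ℂ ({g 0} : Set (EuclideanSpace ℂ (Fin 2))) :=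
    lemB g hgdiff hg'cont h0 hspan
  -- Transfer back to V
  have hmemU : ∀ t, γ t ∈ W ⊔ Submodule.span ℂ ({γ 0} : Set V) := by
    intro t
    obtain ⟨c, hc⟩ := Submodule.mem_span_singleton.mp (hg0 t)
    have : γ t - c • γ 0 ∈ W := by
      rw [← hkerF, LinearMap.mem_ker]
      have : F (γ t - c • γ 0) = g t - c • g 0 := by
        simp [map_sub, map_smul, hFc, hgdef]
      rw [this, ← hc, sub_self]
    have hdecomp : γ t = (γ t - c • γ 0) + c • γ 0 := by abel
    rw [hdecomp]
    exact Submodule.add_mem _ (Submodule.mem_sup_left this)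
      (Submodule.mem_sup_right (Submodule.mem_span_singleton.mpr ⟨c, rfl⟩))
  constructor
  · calc finrank ℂ ↥(W ⊔ Submodule.span ℂ ({γ 0} : Set V))
        ≤ finrank ℂ W + finrank ℂ ↥(Submodule.span ℂ ({γ 0} : Set V)) := finrank_sup_le' _ _
      _ ≤ 3 + 1 := by rw [hWdim]; exact Nat.add_le_add_left (finrank_span_single_le _) 3
      _ = 4 := rfl
  · intro t
    refine ⟨hmemU t, ?_⟩
    have hsub : W ⊔ Submodule.span ℂ ({γ t} : Set V) ≤ W ⊔ Submodule.span ℂ ({γ 0} : Set V) := by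
      refine sup_le le_sup_left ?_
      rw [Submodule.span_le]
      intro x hx
      rw [Set.mem_singleton_iff] at hx
      rw [hx]
      exact hmemU t
    exact hsub (step1 t)
end

section
/- Let V be a 5-dimensional complex normed vector space, L ⊆ V a 2-dimensional ℂ-linear subspace (a line s in P⁴), and γ : ℝ → V a differentiable map with γ(t) ∉ L for every t. If for every t ∈ ℝ the tangent line span_ℂ{γ(t), deriv γ t} has nonzero intersection with L, then for every t ∈ ℝ the point γ(t) lies in L ⊔ span_ℂ{γ(0)}, a subspace of dimension at most 3 containing L; i.e. the curve is contained in a plane of P⁴ passing through the line s. -/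
open Submodule Metric Set


/-- A curve in `P⁴` (given by a differentiable `γ : ℝ → V` with `dim V = 5`) avoiding a
line `s = P(L)` (with `dim L = 2`) and all of whose tangent lines meet `s` is contained
in `L ⊔ span ℂ {γ 0}`, a subspace of dimension at most `3` containing `L`, i.e. the
curve lies in a plane of `P⁴` through the line `s`. -/
theorem curve_in_plane_of_tangents_meet_line_P4
    {V : Type*} [NormedAddCommGroup V] [NormedSpace ℂ V] [FiniteDimensional ℂ V]
    (hV : Module.finrank ℂ V = 5)
    (L : Submodule ℂ V) (hLdim : Module.finrank ℂ L = 2)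
    (γ : ℝ → V) (hγ : Differentiable ℝ γ)
    (hL : ∀ t : ℝ, γ t ∉ L)
    (htan : ∀ t : ℝ, Submodule.span ℂ {γ t, deriv γ t} ⊓ L ≠ ⊥) :
    (∀ t : ℝ, γ t ∈ L ⊔ Submodule.span ℂ {γ 0}) ∧
      Module.finrank ℂ ↥(L ⊔ Submodule.span ℂ {γ 0}) ≤ 3 := by
  -- Key consequence of the tangency hypothesis
  have key : ∀ t : ℝ, ∃ c : ℂ, deriv γ t + c • γ t ∈ L := by
    intro t
    obtain ⟨x, hx, hx0⟩ := Submodule.exists_mem_ne_zero_of_ne_bot (htan t)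
    obtain ⟨hxs, hxL⟩ := Submodule.mem_inf.mp hx
    obtain ⟨a, b, hab⟩ := Submodule.mem_span_pair.mp hxs
    by_cases hb : b = 0
    · exfalso
      have ha : a ≠ 0 := by
        rintro rfl; apply hx0; rw [← hab, hb]; simp
      exact hL t (by simpa [← hab, hb, ha] using L.smul_mem a⁻¹ hxL)
    · refine ⟨a / b, ?_⟩
      have := L.smul_mem b⁻¹ hxL
      rw [← hab] at this
      have h2 : b⁻¹ • (a • γ t + b • deriv γ t) = deriv γ t + (a / b) • γ t := by
        rw [smul_add, smul_smul, smul_smul, inv_mul_cancel₀ hb, one_smul, div_eq_inv_mul,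
          add_comm]
      rwa [h2] at this
  set M : Submodule ℂ V := L ⊔ Submodule.span ℂ {γ 0} with hM
  have hLM : L ≤ M := le_sup_left
  constructor
  · -- clopen argument
    suffices hSU : {t : ℝ | γ t ∈ M} = Set.univ by
      intro t
      have : t ∈ ({t : ℝ | γ t ∈ M}) := hSU ▸ Set.mem_univ t
      exact this
    set S : Set ℝ := {t | γ t ∈ M} with hS
    have hSne : S.Nonempty := ⟨0, le_sup_right (α := Submodule ℂ V)
      (Submodule.mem_span_singleton_self _)⟩
    have hSclosed : IsClosed S :=
      (M.closed_of_finiteDimensional).preimage hγ.continuous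
    have hSopen : IsOpen S := by
      rw [isOpen_iff_mem_nhds]
      intro t₁ ht₁
      -- a functional φ vanishing on L but not at γ t₁
      have hq : L.mkQ (γ t₁) ≠ 0 := by
        simpa [Submodule.Quotient.mk_eq_zero] using hL t₁
      have : ¬ (∀ f : Module.Dual ℂ (V ⧸ L), f (L.mkQ (γ t₁)) = 0) := by
        rw [Module.forall_dual_apply_eq_zero_iff]; exact hq
      push_neg at this
      obtain ⟨f, hf⟩ := this
      set φ : V →ₗ[ℂ] ℂ := f ∘ₗ L.mkQ with hφdef
      have hφL : ∀ x ∈ L, φ x = 0 := by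
        intro x hx
        simp [hφdef, (Submodule.Quotient.mk_eq_zero L).mpr hx]
      have hφt₁ : φ (γ t₁) ≠ 0 := hf
      have hφcont : Continuous φ := φ.continuous_of_finiteDimensional
      have hvc : Continuous fun t => φ (γ t) := hφcont.comp hγ.continuous
      have hopen : IsOpen {t : ℝ | φ (γ t) ≠ 0} :=
        isOpen_compl_iff.mpr (isClosed_singleton.preimage hvc)
      obtain ⟨ε, hε, hball⟩ := Metric.isOpen_iff.mp hopen t₁ hφt₁
      refine Filter.mem_of_superset (Metric.ball_mem_nhds t₁ hε) ?_
      intro t ht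
      -- show γ t ∈ M using all functionals vanishing on M
      show γ t ∈ M
      rw [← Submodule.Quotient.mk_eq_zero M, ← Module.forall_dual_apply_eq_zero_iff ℂ]
      intro g
      set ψ : V →ₗ[ℂ] ℂ := g ∘ₗ M.mkQ with hψdef
      have hψM : ∀ x ∈ M, ψ x = 0 := by
        intro x hx
        simp [hψdef, (Submodule.Quotient.mk_eq_zero M).mpr hx]
      have hψL : ∀ x ∈ L, ψ x = 0 := fun x hx => hψM x (hLM hx)
      -- h := ψ∘γ / φ∘γ has zero derivative on the ball
      have hder : ∀ s ∈ Metric.ball t₁ ε,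
          HasDerivAt (fun u => ψ (γ u) / φ (γ u)) 0 s := by
        intro s hs
        obtain ⟨c, hc⟩ := key s
        have hγs : HasDerivAt γ (deriv γ s) s := (hγ s).hasDerivAt
        have hu : HasDerivAt (fun u => ψ (γ u)) (ψ (deriv γ s)) s :=
          ((ψ.toContinuousLinearMap.restrictScalars ℝ).hasFDerivAt).comp_hasDerivAt s hγs
        have hv : HasDerivAt (fun u => φ (γ u)) (φ (deriv γ s)) s :=
          ((φ.toContinuousLinearMap.restrictScalars ℝ).hasFDerivAt).comp_hasDerivAt s hγs
        have hψ' : ψ (deriv γ s) = -c * ψ (γ s) := by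
          have := hψL _ hc
          rw [map_add, map_smul, smul_eq_mul] at this
          linear_combination this
        have hφ' : φ (deriv γ s) = -c * φ (γ s) := by
          have := hφL _ hc
          rw [map_add, map_smul, smul_eq_mul] at this
          linear_combination this
        have hvs : φ (γ s) ≠ 0 := hball hs
        have := hu.div hv hvs
        refine this.congr_deriv ?_
        rw [hψ', hφ']
        field_simp
        ring
      have hconst : ψ (γ t) / φ (γ t) = ψ (γ t₁) / φ (γ t₁) :=
        (convex_ball t₁ ε).is_const_of_fderivWithin_eq_zero
          (fun s hs => ((hder s hs).differentiableAt).differentiableWithinAt)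
          (fun s hs => by
            rw [fderivWithin_eq_fderiv (Metric.isOpen_ball.uniqueDiffWithinAt hs)
              (hder s hs).differentiableAt, (hder s hs).hasFDerivAt.fderiv]
            ext x
            simp)
          ht (Metric.mem_ball_self hε)
      have hψt₁ : ψ (γ t₁) = 0 := hψM _ ht₁
      rw [hψt₁, zero_div] at hconst
      have := (div_eq_zero_iff.mp hconst).resolve_right (hball ht)
      exact this
    exact IsClopen.eq_univ ⟨hSclosed, hSopen⟩ hSne
  · -- dimension bound
    have h1 : Module.finrank ℂ ↥(Submodule.span ℂ {γ 0}) ≤ 1 := by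
      simpa using finrank_span_le_card ({γ 0} : Set V)
    have h2 := Submodule.finrank_sup_add_finrank_inf_eq L (Submodule.span ℂ {γ 0})
    rw [← hM] at h2
    omega
end
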